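/- arXiv:1512.07494 — 2 statements merged into one kernel-verified Lean document; each statement's English description precedes it below -/
import Mathlib

section
/- For an independent edit path P from G1 to G2 with associated subgraphs \u011c1\u2286G1 and \u011c2\u2286G2 (\u011c1 the result of removals, \u011c2 the result of removals then substitutions), the cost of P equals the sum of: removal costs of nodes in V1\\\u011c1 and edges in E1\\\u00ca1, substitution costs of nodes in \u011c1 and edges in \u00ca1, and insertion costs of nodes in V2\\\u011c2 and edges in E2\\\u00ca2. -/
/-- Elementary edit operations on labeled graphs. -/
inductive EditOp (L : Type) where
  | rmV (v : ℕ)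
  | rmE (e : ℕ × ℕ)
  | insV (v : ℕ) (l : L)
  | insE (e : ℕ × ℕ) (l : L)
  | subV (v : ℕ) (l : L)
  | subE (e : ℕ × ℕ) (l : L)

/-- A labeled graph (not assumed simple a priori). -/
structure LabeledGraph (L : Type) where
  V : Finset ℕ
  E : Finset (ℕ × ℕ)
  μ : ℕ → L
  ν : ℕ × ℕ → L

/-- A graph is simple: edges join existing vertices, at most one edge per
ordered pair (automatic from `Finset`), and no self-loops. -/
def LabeledGraph.IsSimple {L : Type} (G : LabeledGraph L) : Prop :=
  (∀ e ∈ G.E, e.1 ∈ G.V ∧ e.2 ∈ G.V) ∧ (∀ e ∈ G.E, e.1 ≠ e.2)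

/-- The effect of an elementary edit operation on a graph. -/
def LabeledGraph.apply {L : Type} (G : LabeledGraph L) : EditOp L → LabeledGraph L
  | .rmV v => { G with V := G.V.erase v }
  | .rmE e => { G with E := G.E.erase e }
  | .insV v l => { G with V := insert v G.V, μ := Function.update G.μ v l }
  | .insE e l => { G with E := insert e G.E, ν := Function.update G.ν e l }
  | .subV v l => { G with μ := Function.update G.μ v l }
  | .subE e l => { G with ν := Function.update G.ν e l }

/-- Edit-path legality constraints for an elementary operation: a node may be
removed only after all its incident edges have been removed; an edge may be
inserted only between two existing nodes, without creating a parallel edge or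
a self-loop; removals and substitutions apply to existing elements; node
insertion requires a fresh node. -/
def LabeledGraph.Legal {L : Type} (G : LabeledGraph L) : EditOp L → Prop
  | .rmV v => v ∈ G.V ∧ ∀ e ∈ G.E, e.1 ≠ v ∧ e.2 ≠ v
  | .rmE e => e ∈ G.E
  | .insV v _ => v ∉ G.V
  | .insE e _ => e.1 ∈ G.V ∧ e.2 ∈ G.V ∧ e ∉ G.E ∧ e.1 ≠ e.2
  | .subV v _ => v ∈ G.V
  | .subE e _ => e ∈ G.E

/-- `IsEditPath G P G'` : the sequence of elementary operations `P` is an edit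
path of `G` (each operation is legal when performed) transforming `G` into `G'`. -/
inductive IsEditPath {L : Type} : LabeledGraph L → List (EditOp L) → LabeledGraph L → Prop
  | nil (G : LabeledGraph L) : IsEditPath G [] G
  | cons {G G'' : LabeledGraph L} {op : EditOp L} {P : List (EditOp L)} :
      G.Legal op → IsEditPath (G.apply op) P G'' → IsEditPath G (op :: P) G''

/-- Classification of elementary operations. -/
def EditOp.isRemoval {L : Type} : EditOp L → Prop
  | .rmV _ => True | .rmE _ => True | _ => False

def EditOp.isSubstitution {L : Type} : EditOp L → Prop
  | .subV _ _ => True | .subE _ _ => True | _ => False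

def EditOp.isInsertion {L : Type} : EditOp L → Prop
  | .insV _ _ => True | .insE _ _ => True | _ => False

/-- An independent edit path: no node or edge is both substituted and removed,
none is both substituted and inserted, no inserted element is later removed,
and every node or edge is substituted at most once. -/
def Indep {L : Type} (P : List (EditOp L)) : Prop :=
  (∀ v l, EditOp.subV v l ∈ P → EditOp.rmV (L := L) v ∉ P) ∧
  (∀ e l, EditOp.subE e l ∈ P → EditOp.rmE (L := L) e ∉ P) ∧
  (∀ v l l', EditOp.subV v l ∈ P → EditOp.insV v l' ∉ P) ∧
  (∀ e l l', EditOp.subE e l ∈ P → EditOp.insE e l' ∉ P) ∧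
  (∀ v l, ¬ List.Sublist [EditOp.insV v l, EditOp.rmV v] P) ∧
  (∀ e l, ¬ List.Sublist [EditOp.insE e l, EditOp.rmE e] P) ∧
  (∀ v, P.countP (fun op => match op with | .subV w _ => decide (w = v) | _ => false) ≤ 1) ∧
  (∀ e, P.countP (fun op => match op with | .subE f _ => decide (f = e) | _ => false) ≤ 1)

/-- Cost of an elementary operation, performed on the current graph `G`
(substitution costs depend on the old and new labels). -/
def opCost {L : Type} (cvd : ℕ → ℝ) (ced : ℕ × ℕ → ℝ) (cvi : ℕ → L → ℝ)
    (cei : ℕ × ℕ → L → ℝ) (cvs : ℕ → L → L → ℝ) (ces : ℕ × ℕ → L → L → ℝ)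
    (G : LabeledGraph L) : EditOp L → ℝ
  | .rmV v => cvd v
  | .rmE e => ced e
  | .insV v l => cvi v l
  | .insE e l => cei e l
  | .subV v l => cvs v (G.μ v) l
  | .subE e l => ces e (G.ν e) l

/-- Cost of an edit path: the sum of the costs of its elementary operations. -/
def pathCost {L : Type} (cvd : ℕ → ℝ) (ced : ℕ × ℕ → ℝ) (cvi : ℕ → L → ℝ)
    (cei : ℕ × ℕ → L → ℝ) (cvs : ℕ → L → L → ℝ) (ces : ℕ × ℕ → L → L → ℝ)
    (G : LabeledGraph L) : List (EditOp L) → ℝ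
  | [] => 0
  | op :: P => opCost cvd ced cvi cei cvs ces G op
      + pathCost cvd ced cvi cei cvs ces (G.apply op) P


/-!
Cost is additive along a path, so the cost of `R ++ S ++ I` is the sum of the costs of the three
phases. Removals only shrink the graph and insertions only grow it without relabelling what is
already there, so the removed (inserted) elements are exactly those of `G1` not in `H1` (of `G2`
not in `H2`), each paid once. In the substitution phase independence says every element is
substituted at most once, so a substituted element pays for its change from the `H1`-label to its
final `H2`-label, and an element that is never substituted pays the zero cost of an identity
substitution.
-/

open Finset

namespace EditOp

variable {L : Type}

def substitutesV (v : ℕ) : EditOp L → Bool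
  | .subV w _ => decide (w = v)
  | _ => false

def substitutesE (e : ℕ × ℕ) : EditOp L → Bool
  | .subE f _ => decide (f = e)
  | _ => false

theorem subV_notMem_of_countP_cons_le_one {v : ℕ} {l : L} {P : List (EditOp L)}
    (h : (subV v l :: P).countP (substitutesV v) ≤ 1) (l' : L) : subV v l' ∉ P := by
  intro hmem
  have hself : ∀ l'' : L, substitutesV v (subV v l'') = true := by simp [substitutesV]
  have hpos := List.countP_pos_iff.2 ⟨_, hmem, hself l'⟩
  rw [List.countP_cons_of_pos (hself l)] at h
  omega

theorem subE_notMem_of_countP_cons_le_one {e : ℕ × ℕ} {l : L} {P : List (EditOp L)}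
    (h : (subE e l :: P).countP (substitutesE e) ≤ 1) (l' : L) : subE e l' ∉ P := by
  intro hmem
  have hself : ∀ l'' : L, substitutesE e (subE e l'') = true := by simp [substitutesE]
  have hpos := List.countP_pos_iff.2 ⟨_, hmem, hself l'⟩
  rw [List.countP_cons_of_pos (hself l)] at h
  omega

end EditOp

theorem Finset.sum_eq_add_sum_update {α β M : Type*} [DecidableEq α] [AddCommMonoid M]
    {s : Finset α} {a : α} (ha : a ∈ s) (c : α → β → β → M) (hc : ∀ b, c a b b = 0)
    (f g : α → β) :
    ∑ x ∈ s, c x (f x) (g x) =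
      c a (f a) (g a) + ∑ x ∈ s, c x (Function.update f a (g a) x) (g x) := by
  rw [← add_sum_erase s _ ha,
    ← add_sum_erase s (fun x => c x (Function.update f a (g a) x) (g x)) ha,
    Function.update_self, hc, zero_add]
  congr 1
  refine sum_congr rfl fun x hx => ?_
  rw [Function.update_of_ne (ne_of_mem_erase hx)]

namespace LabeledGraph

variable {L : Type}

def IsLabeledSubgraph (H G : LabeledGraph L) : Prop :=
  H.V ⊆ G.V ∧ H.E ⊆ G.E ∧ (∀ v ∈ H.V, G.μ v = H.μ v) ∧ ∀ e ∈ H.E, G.ν e = H.ν e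

theorem isLabeledSubgraph_refl (G : LabeledGraph L) : G.IsLabeledSubgraph G :=
  ⟨subset_rfl, subset_rfl, fun _ _ => rfl, fun _ _ => rfl⟩

theorem IsLabeledSubgraph.trans {G H K : LabeledGraph L} (hGH : G.IsLabeledSubgraph H)
    (hHK : H.IsLabeledSubgraph K) : G.IsLabeledSubgraph K :=
  ⟨hGH.1.trans hHK.1, hGH.2.1.trans hHK.2.1,
    fun v hv => (hHK.2.2.1 v (hGH.1 hv)).trans (hGH.2.2.1 v hv),
    fun e he => (hHK.2.2.2 e (hGH.2.1 he)).trans (hGH.2.2.2 e he)⟩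

theorem apply_isLabeledSubgraph (G : LabeledGraph L) {op : EditOp L} (hop : op.isRemoval) :
    (G.apply op).IsLabeledSubgraph G := by
  cases op with
  | rmV v => exact ⟨erase_subset _ _, subset_rfl, fun _ _ => rfl, fun _ _ => rfl⟩
  | rmE e => exact ⟨subset_rfl, erase_subset _ _, fun _ _ => rfl, fun _ _ => rfl⟩
  | _ => exact hop.elim

theorem isLabeledSubgraph_apply {G : LabeledGraph L} {op : EditOp L} (hl : G.Legal op)
    (hop : op.isInsertion) : G.IsLabeledSubgraph (G.apply op) := by
  cases op with
  | insV v l =>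
    exact ⟨subset_insert _ _, subset_rfl,
      fun w hw => Function.update_of_ne (ne_of_mem_of_not_mem hw hl) _ _, fun _ _ => rfl⟩
  | insE e l =>
    exact ⟨subset_rfl, subset_insert _ _, fun _ _ => rfl,
      fun f hf => Function.update_of_ne (ne_of_mem_of_not_mem hf hl.2.2.1) _ _⟩
  | _ => exact hop.elim

end LabeledGraph

namespace IsEditPath

variable {L : Type} {G G' : LabeledGraph L} {P : List (EditOp L)}

theorem rel_of_forall_mem {r : LabeledGraph L → LabeledGraph L → Prop} (hrefl : ∀ G, r G G)
    (htrans : ∀ {G H K}, r G H → r H K → r G K) {p : EditOp L → Prop}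
    (hstep : ∀ G op, G.Legal op → p op → r G (G.apply op))
    (h : IsEditPath G P G') (hP : ∀ op ∈ P, p op) : r G G' := by
  induction h with
  | nil G => exact hrefl G
  | cons hl _ ih =>
    exact htrans (hstep _ _ hl (hP _ List.mem_cons_self))
      (ih fun op hop => hP op (List.mem_cons_of_mem _ hop))

theorem isLabeledSubgraph_of_isRemoval (h : IsEditPath G P G') (hP : ∀ op ∈ P, op.isRemoval) :
    G'.IsLabeledSubgraph G :=
  h.rel_of_forall_mem (r := fun G G' => G'.IsLabeledSubgraph G)
    LabeledGraph.isLabeledSubgraph_refl (fun hGH hHK => hHK.trans hGH)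
    (fun G _ _ hop => G.apply_isLabeledSubgraph hop) hP

theorem isLabeledSubgraph_of_isInsertion (h : IsEditPath G P G')
    (hP : ∀ op ∈ P, op.isInsertion) : G.IsLabeledSubgraph G' :=
  h.rel_of_forall_mem LabeledGraph.isLabeledSubgraph_refl
    LabeledGraph.IsLabeledSubgraph.trans
    (fun _ _ hl hop => LabeledGraph.isLabeledSubgraph_apply hl hop) hP

theorem μ_eq_of_isSubstitution (h : IsEditPath G P G') (hP : ∀ op ∈ P, op.isSubstitution)
    {v : ℕ} (hv : ∀ l, EditOp.subV v l ∉ P) : G'.μ v = G.μ v := by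
  refine h.rel_of_forall_mem (r := fun G G' => G'.μ v = G.μ v)
    (p := fun op => op.isSubstitution ∧ ∀ l, op ≠ .subV v l) (fun _ => rfl)
    (fun hGH hHK => hHK.trans hGH) (fun G op _ hop => ?_)
    fun op hop => ⟨hP op hop, fun l hl => hv l (hl ▸ hop)⟩
  cases op with
  | subV w l => exact Function.update_of_ne (fun hwv => hop.2 l (by rw [hwv])) _ _
  | subE e l => rfl
  | _ => exact hop.1.elim

theorem ν_eq_of_isSubstitution (h : IsEditPath G P G') (hP : ∀ op ∈ P, op.isSubstitution)
    {e : ℕ × ℕ} (he : ∀ l, EditOp.subE e l ∉ P) : G'.ν e = G.ν e := by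
  refine h.rel_of_forall_mem (r := fun G G' => G'.ν e = G.ν e)
    (p := fun op => op.isSubstitution ∧ ∀ l, op ≠ .subE e l) (fun _ => rfl)
    (fun hGH hHK => hHK.trans hGH) (fun G op _ hop => ?_)
    fun op hop => ⟨hP op hop, fun l hl => he l (hl ▸ hop)⟩
  cases op with
  | subV v l => rfl
  | subE f l => exact Function.update_of_ne (fun hfe => hop.2 l (by rw [hfe])) _ _
  | _ => exact hop.1.elim

end IsEditPath

section Cost

variable {L : Type} (cvd : ℕ → ℝ) (ced : ℕ × ℕ → ℝ) (cvi : ℕ → L → ℝ) (cei : ℕ × ℕ → L → ℝ)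
  (cvs : ℕ → L → L → ℝ) (ces : ℕ × ℕ → L → L → ℝ)

theorem pathCost_append {G G' : LabeledGraph L} {P : List (EditOp L)} (h : IsEditPath G P G')
    (Q : List (EditOp L)) :
    pathCost cvd ced cvi cei cvs ces G (P ++ Q) =
      pathCost cvd ced cvi cei cvs ces G P + pathCost cvd ced cvi cei cvs ces G' Q := by
  induction h with
  | nil G => simp [pathCost]
  | cons _ _ ih => simp [pathCost, ih, add_assoc]

theorem pathCost_of_isRemoval {G H : LabeledGraph L} {R : List (EditOp L)}
    (h : IsEditPath G R H) (hR : ∀ op ∈ R, op.isRemoval) :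
    pathCost cvd ced cvi cei cvs ces G R =
      (∑ v ∈ G.V \ H.V, cvd v) + ∑ e ∈ G.E \ H.E, ced e := by
  induction h with
  | nil => simp [pathCost]
  | @cons G H op P hl hP ih =>
    have hR' : ∀ op ∈ P, op.isRemoval := fun op hop => hR op (List.mem_cons_of_mem _ hop)
    have hsub := hP.isLabeledSubgraph_of_isRemoval hR'
    rw [pathCost, ih hR']
    cases op with
    | rmV v =>
      have hv : v ∈ G.V \ H.V :=
        mem_sdiff.2 ⟨hl.1, fun hvH => by simpa [LabeledGraph.apply] using hsub.1 hvH⟩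
      simp only [opCost, LabeledGraph.apply]
      rw [erase_sdiff_comm, ← add_sum_erase _ _ hv]
      ring
    | rmE e =>
      have he : e ∈ G.E \ H.E :=
        mem_sdiff.2 ⟨hl, fun heH => by simpa [LabeledGraph.apply] using hsub.2.1 heH⟩
      simp only [opCost, LabeledGraph.apply]
      rw [erase_sdiff_comm, ← add_sum_erase _ _ he]
      ring
    | _ => exact (hR _ List.mem_cons_self).elim

theorem pathCost_of_isInsertion {H G : LabeledGraph L} {I : List (EditOp L)}
    (h : IsEditPath H I G) (hI : ∀ op ∈ I, op.isInsertion) :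
    pathCost cvd ced cvi cei cvs ces H I =
      (∑ v ∈ G.V \ H.V, cvi v (G.μ v)) + ∑ e ∈ G.E \ H.E, cei e (G.ν e) := by
  induction h with
  | nil => simp [pathCost]
  | @cons H G op P hl hP ih =>
    have hI' : ∀ op ∈ P, op.isInsertion := fun op hop => hI op (List.mem_cons_of_mem _ hop)
    have hsub := hP.isLabeledSubgraph_of_isInsertion hI'
    rw [pathCost, ih hI']
    cases op with
    | insV v l =>
      have hv : v ∈ G.V \ H.V := mem_sdiff.2 ⟨hsub.1 (mem_insert_self _ _), hl⟩
      have hμ : G.μ v = l := by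
        simpa [LabeledGraph.apply] using hsub.2.2.1 v (mem_insert_self _ _)
      simp only [opCost, LabeledGraph.apply]
      rw [sdiff_insert, ← add_sum_erase _ _ hv, hμ]
      ring
    | insE e l =>
      have he : e ∈ G.E \ H.E := mem_sdiff.2 ⟨hsub.2.1 (mem_insert_self _ _), hl.2.2.1⟩
      have hν : G.ν e = l := by
        simpa [LabeledGraph.apply] using hsub.2.2.2 e (mem_insert_self _ _)
      simp only [opCost, LabeledGraph.apply]
      rw [sdiff_insert, ← add_sum_erase _ _ he, hν]
      ring
    | _ => exact (hI _ List.mem_cons_self).elim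

theorem pathCost_of_isSubstitution (hid_v : ∀ v l, cvs v l l = 0) (hid_e : ∀ e l, ces e l l = 0)
    {H H' : LabeledGraph L} {S : List (EditOp L)} (h : IsEditPath H S H')
    (hS : ∀ op ∈ S, op.isSubstitution) (hSv : ∀ v, S.countP (EditOp.substitutesV v) ≤ 1)
    (hSe : ∀ e, S.countP (EditOp.substitutesE e) ≤ 1) :
    pathCost cvd ced cvi cei cvs ces H S =
      (∑ v ∈ H.V, cvs v (H.μ v) (H'.μ v)) + ∑ e ∈ H.E, ces e (H.ν e) (H'.ν e) := by
  induction h with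
  | nil => simp [pathCost, hid_v, hid_e]
  | @cons H H' op P hl hP ih =>
    have hS' : ∀ op ∈ P, op.isSubstitution := fun op hop => hS op (List.mem_cons_of_mem _ hop)
    have hcount {p : EditOp L → Bool} (hp : (op :: P).countP p ≤ 1) : P.countP p ≤ 1 :=
      (List.sublist_cons_self op P).countP_le.trans hp
    rw [pathCost, ih hS' (fun v => hcount (hSv v)) (fun e => hcount (hSe e))]
    cases op with
    | subV v l =>
      have hμ : H'.μ v = l := by
        rw [hP.μ_eq_of_isSubstitution hS' (EditOp.subV_notMem_of_countP_cons_le_one (hSv v))]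
        exact Function.update_self ..
      simp only [opCost, LabeledGraph.apply]
      rw [sum_eq_add_sum_update hl cvs (hid_v v) H.μ H'.μ, hμ]
      ring
    | subE e l =>
      have hν : H'.ν e = l := by
        rw [hP.ν_eq_of_isSubstitution hS' (EditOp.subE_notMem_of_countP_cons_le_one (hSe e))]
        exact Function.update_self ..
      simp only [opCost, LabeledGraph.apply]
      rw [sum_eq_add_sum_update hl ces (hid_e e) H.ν H'.ν, hν]
      ring
    | _ => exact (hS _ List.mem_cons_self).elim

end Cost

theorem indep_editPath_cost_general {L : Type} (G1 G2 H1 H2 : LabeledGraph L)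
    (cvd : ℕ → ℝ) (ced : ℕ × ℕ → ℝ) (cvi : ℕ → L → ℝ) (cei : ℕ × ℕ → L → ℝ)
    (cvs : ℕ → L → L → ℝ) (ces : ℕ × ℕ → L → L → ℝ)
    (hid_v : ∀ v l, cvs v l l = 0) (hid_e : ∀ e l, ces e l l = 0)
    (R S I : List (EditOp L))
    (hR : ∀ op ∈ R, op.isRemoval) (hS : ∀ op ∈ S, op.isSubstitution)
    (hI : ∀ op ∈ I, op.isInsertion)
    (hInd : Indep (R ++ S ++ I))
    (h1 : IsEditPath G1 R H1) (h2 : IsEditPath H1 S H2) (h3 : IsEditPath H2 I G2) :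
    pathCost cvd ced cvi cei cvs ces G1 (R ++ S ++ I) =
      (∑ v ∈ G1.V \ H1.V, cvd v) + (∑ e ∈ G1.E \ H1.E, ced e)
      + (∑ v ∈ H1.V, cvs v (H1.μ v) (H2.μ v)) + (∑ e ∈ H1.E, ces e (H1.ν e) (H2.ν e))
      + (∑ v ∈ G2.V \ H2.V, cvi v (G2.μ v)) + (∑ e ∈ G2.E \ H2.E, cei e (G2.ν e)) := by
  have hS_sub : S.Sublist (R ++ S ++ I) :=
    (List.sublist_append_right R S).trans (List.sublist_append_left _ I)
  have hSv : ∀ v, S.countP (EditOp.substitutesV v) ≤ 1 := fun v =>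
    hS_sub.countP_le.trans (hInd.2.2.2.2.2.2.1 v)
  have hSe : ∀ e, S.countP (EditOp.substitutesE e) ≤ 1 := fun e =>
    hS_sub.countP_le.trans (hInd.2.2.2.2.2.2.2 e)
  rw [List.append_assoc, pathCost_append _ _ _ _ _ _ h1, pathCost_append _ _ _ _ _ _ h2,
    pathCost_of_isRemoval _ _ _ _ _ _ h1 hR,
    pathCost_of_isSubstitution _ _ _ _ _ _ hid_v hid_e h2 hS hSv hSe,
    pathCost_of_isInsertion _ _ _ _ _ _ h3 hI]
  ring

/-- the cost of an independent edit path `P = (R,S,I)` from `G1`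
to `G2`, with `H1` the result of the removals and `H2` the result of removals
then substitutions, equals the sum of removal costs of nodes in `V1\V̂1` and
edges in `E1\Ê1`, substitution costs of nodes in `V̂1` and edges in `Ê1`
(identity substitutions having zero cost), and insertion costs of nodes in
`V2\V̂2` and edges in `E2\Ê2`. -/
theorem indep_editPath_cost {L : Type} (G1 G2 H1 H2 : LabeledGraph L)
    (cvd : ℕ → ℝ) (ced : ℕ × ℕ → ℝ) (cvi : ℕ → L → ℝ) (cei : ℕ × ℕ → L → ℝ)
    (cvs : ℕ → L → L → ℝ) (ces : ℕ × ℕ → L → L → ℝ)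
    (hid_v : ∀ v l, cvs v l l = 0) (hid_e : ∀ e l, ces e l l = 0)
    (R S I : List (EditOp L)) (hG1 : G1.IsSimple)
    (hR : ∀ op ∈ R, op.isRemoval) (hS : ∀ op ∈ S, op.isSubstitution)
    (hI : ∀ op ∈ I, op.isInsertion)
    (hInd : Indep (R ++ S ++ I))
    (h1 : IsEditPath G1 R H1) (h2 : IsEditPath H1 S H2) (h3 : IsEditPath H2 I G2) :
    pathCost cvd ced cvi cei cvs ces G1 (R ++ S ++ I) =
      (∑ v ∈ G1.V \ H1.V, cvd v) + (∑ e ∈ G1.E \ H1.E, ced e)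
      + (∑ v ∈ H1.V, cvs v (H1.μ v) (H2.μ v)) + (∑ e ∈ H1.E, ces e (H1.ν e) (H2.ν e))
      + (∑ v ∈ G2.V \ H2.V, cvi v (G2.μ v)) + (∑ e ∈ G2.E \ H2.E, cei e (G2.ν e)) :=
  indep_editPath_cost_general G1 G2 H1 H2 cvd ced cvi cei cvs ces hid_v hid_e R S I hR hS hI hInd h1
    h2 h3
end

section
/- Let P be the restricted edit path between simple graphs G1 and G2 corresponding to the \u03b5-assignment vector x (vectorized \u03b5-assignment matrix). Let \u0394 = D if both graphs are undirected and \u0394 = D + D^T otherwise, with D the quadratic edge-cost matrix and c the linear node-cost vector. Then the cost of P equals (1/2)x^T\u0394x + c^Tx; conversely every restricted edit path's cost has this form, so GED(G1,G2) = min{(1/2)x^T\u0394x + c^Tx : x a vectorized \u03b5-assignment matrix}. -/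
/-! GED as a quadratic assignment problem over ε-assignments.

`G1` has node set `Fin n` and edge set `E1`; `G2` has node set `Fin m` and
edge set `E2`.  An element of the augmented set `V1^ε` is `inl i` (a node of
`G1`) or `inr k` (the dummy node `ε_k`, `k ∈ V2`); an element of `V2^ε` is
`inl k` (a node of `G2`) or `inr i` (the dummy node `ε_i`, `i ∈ V1`).  The
edit costs are given directly on node/edge pairs (thus encoding the labels). -/

/-- Index of an entry of the vectorized ε-assignment matrix: a pair
`(element of V1^ε, element of V2^ε)`. -/
abbrev AssignIdx (n m : ℕ) : Type := (Fin n ⊕ Fin m) × (Fin m ⊕ Fin n)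

/-- A single node mapping is allowed unless it maps a node `i ∈ V1` to a dummy
`ε_{i'}` with `i' ≠ i`, or a dummy `ε_k` to a node `k' ∈ V2` with `k' ≠ k`. -/
def allowedMap {n m : ℕ} : (Fin n ⊕ Fin m) → (Fin m ⊕ Fin n) → Bool
  | Sum.inl i, Sum.inr i' => i' == i
  | Sum.inr k, Sum.inl k' => k' == k
  | _, _ => true

/-- The edge of `E` determined by a pair of elements of an augmented node set,
if any (dummy nodes carry no edges). -/
def edgeOf {α β : Type} [DecidableEq α] (E : Finset (α × α)) :
    (α ⊕ β) → (α ⊕ β) → Option (α × α)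
  | Sum.inl i, Sum.inl j => if (i, j) ∈ E then some (i, j) else none
  | _, _ => none

/-- The quadratic cost matrix `D`: `d_{ik,jl} = ω` if one of the mappings
`i → k`, `j → l` is forbidden; otherwise the substitution cost of
`(i,j) → (k,l)` if `(i,j) ∈ E1` and `(k,l) ∈ E2`, the removal cost of `(i,j)`
if only `(i,j) ∈ E1`, the insertion cost of `(k,l)` if only `(k,l) ∈ E2`, and
`0` otherwise. -/
noncomputable def Dmat {n m : ℕ} (E1 : Finset (Fin n × Fin n))
    (E2 : Finset (Fin m × Fin m))
    (ces : Fin n × Fin n → Fin m × Fin m → ℝ)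
    (ced : Fin n × Fin n → ℝ) (cei : Fin m × Fin m → ℝ) (ω : ℝ)
    (p q : AssignIdx n m) : ℝ :=
  if allowedMap p.1 p.2 && allowedMap q.1 q.2 then
    match edgeOf E1 p.1 q.1, edgeOf E2 p.2 q.2 with
    | some e, some f => ces e f
    | some e, none => ced e
    | none, some f => cei f
    | none, none => 0
  else ω

/-- The linear (node) cost vector `c`: substitution costs on the
`V1 × V2` block, removal costs on the diagonal of the removal block (`ω`
off-diagonal), insertion costs on the diagonal of the insertion block (`ω`
off-diagonal), and `0` on the auxiliary `ε → ε` block. -/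
noncomputable def cvecQ {n m : ℕ} (cvs : Fin n → Fin m → ℝ)
    (cvd : Fin n → ℝ) (cvi : Fin m → ℝ) (ω : ℝ) : AssignIdx n m → ℝ
  | (Sum.inl i, Sum.inl k) => cvs i k
  | (Sum.inl i, Sum.inr i') => if i' = i then cvd i else ω
  | (Sum.inr k, Sum.inl k') => if k' = k then cvi k else ω
  | (Sum.inr _, Sum.inr _) => 0

/-- `x` is (the vectorization of) an ε-assignment matrix: binary, all row and
column sums equal `1`, and the removal/insertion blocks are diagonal. -/
def IsEpsAssign {n m : ℕ} (x : AssignIdx n m → ℝ) : Prop :=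
  (∀ p, x p = 0 ∨ x p = 1) ∧
  (∀ a : Fin n ⊕ Fin m, ∑ b : Fin m ⊕ Fin n, x (a, b) = 1) ∧
  (∀ b : Fin m ⊕ Fin n, ∑ a : Fin n ⊕ Fin m, x (a, b) = 1) ∧
  (∀ (i : Fin n) (i' : Fin n), x (Sum.inl i, Sum.inr i') = 1 → i' = i) ∧
  (∀ (k : Fin m) (k' : Fin m), x (Sum.inr k, Sum.inl k') = 1 → k' = k)

/-- A restricted edit path from `G1` to `G2`, in canonical form: node
substitutions (an injective partial matching of `Fin n` with `Fin m`), node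
removals and insertions (the non-matched nodes), together with the induced
edge substitutions, removals and insertions. -/
structure RestrictedEditPath (n m : ℕ) (E1 : Finset (Fin n × Fin n))
    (E2 : Finset (Fin m × Fin m)) where
  nsub : Finset (Fin n × Fin m)
  nrem : Finset (Fin n)
  nins : Finset (Fin m)
  esub : Finset ((Fin n × Fin n) × (Fin m × Fin m))
  erem : Finset (Fin n × Fin n)
  eins : Finset (Fin m × Fin m)
  nsub_fun : ∀ p ∈ nsub, ∀ q ∈ nsub, p.1 = q.1 → p.2 = q.2
  nsub_inj : ∀ p ∈ nsub, ∀ q ∈ nsub, p.2 = q.2 → p.1 = q.1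
  nrem_eq : nrem = Finset.univ \ nsub.image Prod.fst
  nins_eq : nins = Finset.univ \ nsub.image Prod.snd
  esub_mem : ∀ q ∈ esub, q.1 ∈ E1 ∧ q.2 ∈ E2 ∧
      (q.1.1, q.2.1) ∈ nsub ∧ (q.1.2, q.2.2) ∈ nsub
  esub_total : ∀ e ∈ E1, ∀ (k l : Fin m),
      (e.1, k) ∈ nsub → (e.2, l) ∈ nsub → (k, l) ∈ E2 → (e, (k, l)) ∈ esub
  erem_eq : erem = E1 \ esub.image Prod.fst
  eins_eq : eins = E2 \ esub.image Prod.snd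

/-- Cost of a restricted edit path (`κ` is `1` for directed graphs and `1/2`
for undirected graphs, where every edge is stored in both orientations and
every edge operation is hence counted twice). -/
noncomputable def pathCostR {n m : ℕ} {E1 : Finset (Fin n × Fin n)}
    {E2 : Finset (Fin m × Fin m)} (cvs : Fin n → Fin m → ℝ) (cvd : Fin n → ℝ)
    (cvi : Fin m → ℝ) (ces : Fin n × Fin n → Fin m × Fin m → ℝ)
    (ced : Fin n × Fin n → ℝ) (cei : Fin m × Fin m → ℝ) (κ : ℝ)
    (P : RestrictedEditPath n m E1 E2) : ℝ :=
  (∑ p ∈ P.nsub, cvs p.1 p.2) + (∑ i ∈ P.nrem, cvd i) + (∑ k ∈ P.nins, cvi k)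
    + κ * ((∑ q ∈ P.esub, ces q.1 q.2) + (∑ e ∈ P.erem, ced e)
            + (∑ f ∈ P.eins, cei f))

/-- The ε-assignment vector associated with a restricted edit path. -/
def assignOf {n m : ℕ} {E1 : Finset (Fin n × Fin n)}
    {E2 : Finset (Fin m × Fin m)} (P : RestrictedEditPath n m E1 E2) :
    AssignIdx n m → ℝ
  | (Sum.inl i, Sum.inl k) => if (i, k) ∈ P.nsub then 1 else 0
  | (Sum.inl i, Sum.inr i') => if i' = i ∧ i ∈ P.nrem then 1 else 0
  | (Sum.inr k, Sum.inl k') => if k' = k ∧ k ∈ P.nins then 1 else 0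
  | (Sum.inr k, Sum.inr i) => if (i, k) ∈ P.nsub then 1 else 0

/-- The quadratic form `xᵀΔx`. -/
noncomputable def quadForm {n m : ℕ} (Δ : AssignIdx n m → AssignIdx n m → ℝ)
    (x : AssignIdx n m → ℝ) : ℝ :=
  ∑ p : AssignIdx n m, ∑ q : AssignIdx n m, x p * Δ p q * x q

/-- The linear form `cᵀx`. -/
noncomputable def linForm {n m : ℕ} (c x : AssignIdx n m → ℝ) : ℝ :=
  ∑ p : AssignIdx n m, c p * x p

/-! An ε-assignment matrix is the permutation matrix of a bijection `σ : V1^ε ≃ V2^ε` that makes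
no forbidden mapping, and the restricted edit path it encodes substitutes `i` by `k` exactly when
`σ i = k`. For a permutation matrix the forms collapse: `xᵀDx = ∑_{a,b} D_{(a,σa),(b,σb)}` and
`cᵀx = ∑_a c_{(a,σa)}`. The linear form is then the node cost of the path. In the quadratic one,
a pair of nodes of `G1` forming an edge `e` contributes the substitution cost of `e` if its image
under `σ` is an edge of `G2`, and the removal cost of `e` otherwise; a pair that is no edge but is
mapped onto an edge `f` contributes the insertion cost of `f`, and reindexing by `σ⁻¹` turns these
terms into a sum over the edges of `G2` whose preimage is not an edge. So `xᵀDx` is the edge cost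
of the path, and `xᵀ(D + Dᵀ)x = 2 xᵀDx`. -/

open Finset Sum

theorem existsUnique_eq_one_of_sum_eq_one {ι : Type*} [Fintype ι] {f : ι → ℝ}
    (h01 : ∀ i, f i = 0 ∨ f i = 1) (hsum : ∑ i, f i = 1) : ∃! i, f i = 1 := by
  classical
  have hcard : #{i | f i = 1} = 1 := by
    have : ∑ i, f i = ∑ i, if f i = 1 then (1 : ℝ) else 0 :=
      Fintype.sum_congr _ _ fun i => by rcases h01 i with h | h <;> simp [h]
    rw [this, Finset.sum_boole] at hsum
    exact_mod_cast hsum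
  obtain ⟨i, hi⟩ := Finset.card_eq_one.1 hcard
  refine ⟨i, by simpa using hi.ge (mem_singleton_self i), fun j hj => ?_⟩
  simpa using hi.le (by simpa using hj)

theorem exists_equiv_of_zero_one_of_sum_eq_one {α β : Type*} [Fintype α] [Fintype β]
    [DecidableEq β] {x : α × β → ℝ} (h01 : ∀ p, x p = 0 ∨ x p = 1)
    (hrow : ∀ a, ∑ b, x (a, b) = 1) (hcol : ∀ b, ∑ a, x (a, b) = 1) :
    ∃ σ : α ≃ β, ∀ a b, x (a, b) = if b = σ a then 1 else 0 := by
  choose σ hσ hσ_uniq using fun a =>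
    existsUnique_eq_one_of_sum_eq_one (fun b => h01 (a, b)) (hrow a)
  have hcolU := fun b =>
    existsUnique_eq_one_of_sum_eq_one (fun a => h01 (a, b)) (hcol b)
  have hbij : Function.Bijective σ := by
    refine ⟨fun a a' h => (hcolU (σ a)).unique (hσ a) (h ▸ hσ a'), fun b => ?_⟩
    obtain ⟨a, ha, -⟩ := hcolU b
    exact ⟨a, (hσ_uniq a b ha).symm⟩
  refine ⟨Equiv.ofBijective σ hbij, fun a b => ?_⟩
  simp only [Equiv.ofBijective_apply]
  split_ifs with h
  · exact h ▸ hσ a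
  · exact (h01 _).resolve_right fun h1 => h (hσ_uniq a b h1)

theorem sum_boole_add_boole_forall_eq_one {β : Type*} [Fintype β] (q : β → Prop)
    [DecidablePred q] [Decidable (∀ b, ¬ q b)] (hq : ∀ b b', q b → q b' → b = b') :
    (∑ b, if q b then (1 : ℝ) else 0) + (if ∀ b, ¬ q b then 1 else 0) = 1 := by
  by_cases h : ∃ b, q b
  · obtain ⟨b, hb⟩ := h
    rw [Fintype.sum_eq_single b fun b' hb' => if_neg fun h => hb' (hq _ _ h hb),
      if_pos hb, if_neg (not_forall_not.2 ⟨b, hb⟩), add_zero]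
  · simp only [not_exists] at h
    simp [h]

theorem sum_eq_sum_elim_of_mem_iff {α β : Type*} [Fintype β] [DecidableEq α] [DecidableEq β]
    {S : Finset (α × β)} {A : Finset α} {τ : α → Option β}
    (hS : ∀ a b, (a, b) ∈ S ↔ a ∈ A ∧ τ a = some b) (g : α → β → ℝ) :
    ∑ q ∈ S, g q.1 q.2 = ∑ a ∈ A, (τ a).elim 0 (g a) := by
  have : S = {q ∈ A ×ˢ (univ : Finset β) | τ q.1 = some q.2} := by
    ext ⟨a, b⟩; simp [hS]
  rw [this, sum_filter, sum_product]
  refine sum_congr rfl fun a _ => ?_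
  rcases h : τ a with _ | b <;> simp [h]

theorem edgeOf_eq_some_iff {α β : Type} [DecidableEq α] {E : Finset (α × α)}
    {a b : α ⊕ β} {e : α × α} :
    edgeOf E a b = some e ↔ a = inl e.1 ∧ b = inl e.2 ∧ e ∈ E := by
  rcases a with i | _ <;> rcases b with j | _ <;> simp only [edgeOf] <;> try split_ifs
  all_goals aesop

theorem sum_edgeOf {α β : Type} [Fintype α] [Fintype β] [DecidableEq α]
    (E : Finset (α × α)) (g : α ⊕ β → α ⊕ β → α × α → ℝ) :
    ∑ a, ∑ b, (edgeOf E a b).elim 0 (g a b) = ∑ e ∈ E, g (inl e.1) (inl e.2) e := by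
  have hinl : ∀ i j, (edgeOf E (inl i : α ⊕ β) (inl j)).elim 0 (g (inl i) (inl j)) =
      if (i, j) ∈ E then g (inl i) (inl j) (i, j) else 0 := fun i j => by
    simp only [edgeOf]; split_ifs <;> rfl
  simp only [Fintype.sum_sum_type, hinl]
  simp only [edgeOf, Option.elim_none, Finset.sum_const_zero, add_zero]
  rw [← Finset.sum_product' (f := fun i j => if (i, j) ∈ E then g (inl i) (inl j) (i, j) else 0),
    Finset.univ_product_univ, Finset.sum_ite_mem, Finset.univ_inter]

def assignVec {n m : ℕ} (σ : Fin n ⊕ Fin m → Fin m ⊕ Fin n) : AssignIdx n m → ℝ :=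
  fun p => if p.2 = σ p.1 then 1 else 0

theorem IsEpsAssign.exists_equiv {n m : ℕ} {x : AssignIdx n m → ℝ} (hx : IsEpsAssign x) :
    ∃ σ : Fin n ⊕ Fin m ≃ Fin m ⊕ Fin n,
      (∀ a, allowedMap a (σ a) = true) ∧ x = assignVec σ := by
  obtain ⟨h01, hrow, hcol, hrem, hins⟩ := hx
  obtain ⟨σ, hσ⟩ := exists_equiv_of_zero_one_of_sum_eq_one h01 hrow hcol
  have hσ1 : ∀ a, x (a, σ a) = 1 := fun a => by simp [hσ]
  refine ⟨σ, fun a => ?_, funext fun p => hσ p.1 p.2⟩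
  rcases a with i | k <;> rcases h : σ _ with k' | i' <;> simp only [allowedMap, beq_iff_eq]
  · exact hrem i i' (h ▸ hσ1 (inl i))
  · exact hins k k' (h ▸ hσ1 (inr k))

section AssignVec

variable {n m : ℕ}

theorem linForm_assignVec (c : AssignIdx n m → ℝ) (σ : Fin n ⊕ Fin m → Fin m ⊕ Fin n) :
    linForm c (assignVec σ) = ∑ a, c (a, σ a) := by
  simp [linForm, assignVec, Fintype.sum_prod_type]

theorem quadForm_assignVec (M : AssignIdx n m → AssignIdx n m → ℝ)
    (σ : Fin n ⊕ Fin m → Fin m ⊕ Fin n) :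
    quadForm M (assignVec σ) = ∑ a, ∑ b, M (a, σ a) (b, σ b) := by
  simp [quadForm, assignVec, Fintype.sum_prod_type]

theorem quadForm_add_transpose (M : AssignIdx n m → AssignIdx n m → ℝ)
    (x : AssignIdx n m → ℝ) :
    quadForm (fun p q => M p q + M q p) x = 2 * quadForm M x := by
  simp only [quadForm, mul_add, add_mul, sum_add_distrib]
  rw [sum_comm (f := fun p q => x p * M q p * x q)]
  simp only [two_mul]
  congr 1
  exact sum_congr rfl fun _ _ => sum_congr rfl fun _ _ => by ring

end AssignVec

namespace RestrictedEditPath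

variable {n m : ℕ} {E1 : Finset (Fin n × Fin n)} {E2 : Finset (Fin m × Fin m)}

theorem mem_nrem_iff (P : RestrictedEditPath n m E1 E2) (i : Fin n) :
    i ∈ P.nrem ↔ ∀ k, (i, k) ∉ P.nsub := by
  simp [P.nrem_eq]

theorem mem_nins_iff (P : RestrictedEditPath n m E1 E2) (k : Fin m) :
    k ∈ P.nins ↔ ∀ i, (i, k) ∉ P.nsub := by
  simp [P.nins_eq]

theorem eq_of_mem_nsub_left (P : RestrictedEditPath n m E1 E2) {i : Fin n} {k k' : Fin m}
    (h : (i, k) ∈ P.nsub) (h' : (i, k') ∈ P.nsub) : k = k' :=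
  P.nsub_fun _ h _ h' rfl

theorem eq_of_mem_nsub_right (P : RestrictedEditPath n m E1 E2) {i i' : Fin n} {k : Fin m}
    (h : (i, k) ∈ P.nsub) (h' : (i', k) ∈ P.nsub) : i = i' :=
  P.nsub_inj _ h _ h' rfl

theorem ext_of_nsub {P Q : RestrictedEditPath n m E1 E2} (h : P.nsub = Q.nsub) : P = Q := by
  have hesub : P.esub = Q.esub := by
    ext ⟨e, k, l⟩
    constructor <;> intro hq
    · obtain ⟨he, hf, h1, h2⟩ := P.esub_mem _ hq
      exact Q.esub_total e he k l (h ▸ h1) (h ▸ h2) hf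
    · obtain ⟨he, hf, h1, h2⟩ := Q.esub_mem _ hq
      exact P.esub_total e he k l (h ▸ h1) (h ▸ h2) hf
  cases P; cases Q
  simp_all

def ofEquiv (E1 : Finset (Fin n × Fin n)) (E2 : Finset (Fin m × Fin m))
    (σ : Fin n ⊕ Fin m ≃ Fin m ⊕ Fin n) : RestrictedEditPath n m E1 E2 where
  nsub := {p | σ (inl p.1) = inl p.2}
  nrem := univ \ Finset.image Prod.fst {p | σ (inl p.1) = inl p.2}
  nins := univ \ Finset.image Prod.snd {p | σ (inl p.1) = inl p.2}
  esub := {q ∈ E1 ×ˢ E2 | σ (inl q.1.1) = inl q.2.1 ∧ σ (inl q.1.2) = inl q.2.2}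
  erem := E1 \ Finset.image Prod.fst
    {q ∈ E1 ×ˢ E2 | σ (inl q.1.1) = inl q.2.1 ∧ σ (inl q.1.2) = inl q.2.2}
  eins := E2 \ Finset.image Prod.snd
    {q ∈ E1 ×ˢ E2 | σ (inl q.1.1) = inl q.2.1 ∧ σ (inl q.1.2) = inl q.2.2}
  nsub_fun p hp q hq h := by
    simp only [mem_filter, mem_univ, true_and] at hp hq
    exact inl_injective (hp.symm.trans (h ▸ hq))
  nsub_inj p hp q hq h := by
    simp only [mem_filter, mem_univ, true_and] at hp hq
    exact inl_injective (σ.injective (hp.trans (h ▸ hq.symm)))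
  nrem_eq := rfl
  nins_eq := rfl
  esub_mem q hq := by
    simp only [mem_filter, mem_product] at hq
    simp [hq]
  esub_total e he k l hk hl hkl := by
    simp only [mem_filter, mem_univ, true_and] at hk hl
    simp [he, hkl, hk, hl]
  erem_eq := rfl
  eins_eq := rfl

variable {σ : Fin n ⊕ Fin m ≃ Fin m ⊕ Fin n}

@[simp]
theorem mem_ofEquiv_nsub {i : Fin n} {k : Fin m} :
    (i, k) ∈ (ofEquiv E1 E2 σ).nsub ↔ σ (inl i) = inl k := by
  simp [ofEquiv]

theorem mem_ofEquiv_nrem (hσ : ∀ a, allowedMap a (σ a) = true) {i : Fin n} :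
    i ∈ (ofEquiv E1 E2 σ).nrem ↔ σ (inl i) = inr i := by
  rw [mem_nrem_iff]
  have := hσ (inl i)
  rcases h : σ (inl i) with k | i' <;> simp_all [allowedMap]

theorem mem_ofEquiv_nins (hσ : ∀ a, allowedMap a (σ a) = true) {k : Fin m} :
    k ∈ (ofEquiv E1 E2 σ).nins ↔ σ (inr k) = inl k := by
  rw [mem_nins_iff]
  simp only [mem_ofEquiv_nsub]
  constructor
  · intro h
    rcases ha : σ.symm (inl k) with i | k'
    · exact absurd (σ.symm_apply_eq.1 ha).symm (h i)
    · have hk : σ (inr k') = inl k := (σ.symm_apply_eq.1 ha).symm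
      have := hσ (inr k')
      obtain rfl : k = k' := by simpa [hk, allowedMap] using this
      exact hk
  · intro h i hi
    exact inl_ne_inr (σ.injective (hi.trans h.symm))

theorem mem_ofEquiv_esub {e : Fin n × Fin n} {f : Fin m × Fin m} :
    (e, f) ∈ (ofEquiv E1 E2 σ).esub ↔
      e ∈ E1 ∧ edgeOf E2 (σ (inl e.1)) (σ (inl e.2)) = some f := by
  simp only [ofEquiv, mem_filter, mem_product, edgeOf_eq_some_iff]
  tauto

theorem mem_ofEquiv_esub_iff_symm {e : Fin n × Fin n} {f : Fin m × Fin m} :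
    (e, f) ∈ (ofEquiv E1 E2 σ).esub ↔
      f ∈ E2 ∧ edgeOf E1 (σ.symm (inl f.1)) (σ.symm (inl f.2)) = some e := by
  simp only [mem_ofEquiv_esub, edgeOf_eq_some_iff, Equiv.symm_apply_eq]
  tauto

theorem mem_ofEquiv_erem {e : Fin n × Fin n} :
    e ∈ (ofEquiv E1 E2 σ).erem ↔ e ∈ E1 ∧ edgeOf E2 (σ (inl e.1)) (σ (inl e.2)) = none := by
  rw [(ofEquiv E1 E2 σ).erem_eq]
  simp only [mem_sdiff, mem_image, Prod.exists, mem_ofEquiv_esub,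
    Option.eq_none_iff_forall_ne_some]
  constructor
  · rintro ⟨he, hne⟩
    exact ⟨he, fun f hf => hne ⟨e.1, e.2, f.1, f.2, ⟨he, hf⟩, rfl⟩⟩
  · rintro ⟨he, hnone⟩
    refine ⟨he, ?_⟩
    rintro ⟨_, _, _, _, ⟨_, hf⟩, rfl⟩
    exact hnone _ hf

theorem mem_ofEquiv_eins {f : Fin m × Fin m} :
    f ∈ (ofEquiv E1 E2 σ).eins ↔
      f ∈ E2 ∧ edgeOf E1 (σ.symm (inl f.1)) (σ.symm (inl f.2)) = none := by
  rw [(ofEquiv E1 E2 σ).eins_eq]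
  simp only [mem_sdiff, mem_image, Prod.exists, mem_ofEquiv_esub_iff_symm,
    Option.eq_none_iff_forall_ne_some]
  constructor
  · rintro ⟨hf, hne⟩
    exact ⟨hf, fun e he => hne ⟨e.1, e.2, f.1, f.2, ⟨hf, he⟩, rfl⟩⟩
  · rintro ⟨hf, hnone⟩
    refine ⟨hf, ?_⟩
    rintro ⟨_, _, _, _, ⟨_, he⟩, rfl⟩
    exact hnone _ he

theorem eq_ofEquiv_of_assignOf_eq {P : RestrictedEditPath n m E1 E2}
    (h : assignOf P = assignVec σ) :
    P = ofEquiv E1 E2 σ := by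
  refine ext_of_nsub (Finset.ext fun ⟨i, k⟩ => ?_)
  have := congrFun h (inl i, inl k)
  simp only [assignOf, assignVec] at this
  rw [mem_ofEquiv_nsub]
  by_cases hik : (i, k) ∈ P.nsub <;> by_cases hσ : inl k = σ (inl i) <;> simp_all [eq_comm]

end RestrictedEditPath

open RestrictedEditPath in
theorem isEpsAssign_assignOf {n m : ℕ} {E1 : Finset (Fin n × Fin n)}
    {E2 : Finset (Fin m × Fin m)} (P : RestrictedEditPath n m E1 E2) :
    IsEpsAssign (assignOf P) := by
  refine ⟨fun ⟨a, b⟩ => ?_, fun a => ?_, fun b => ?_, fun i i' h => ?_, fun k k' h => ?_⟩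
  · rcases a with i | k <;> rcases b with k | i <;> simp only [assignOf] <;> split_ifs <;> simp
  · rcases a with i | k <;>
      simp only [Fintype.sum_sum_type, assignOf, ite_and, Finset.sum_ite_eq', mem_univ,
        if_true, mem_nrem_iff, mem_nins_iff]
    · exact sum_boole_add_boole_forall_eq_one _ fun _ _ => P.eq_of_mem_nsub_left
    · rw [add_comm]
      exact sum_boole_add_boole_forall_eq_one _ fun _ _ => P.eq_of_mem_nsub_right
  · rcases b with k | i <;>
      simp only [Fintype.sum_sum_type, assignOf, ite_and, Finset.sum_ite_eq, mem_univ,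
        if_true, mem_nrem_iff, mem_nins_iff]
    · exact sum_boole_add_boole_forall_eq_one _ fun _ _ => P.eq_of_mem_nsub_right
    · rw [add_comm]
      exact sum_boole_add_boole_forall_eq_one _ fun _ _ => P.eq_of_mem_nsub_left
  · by_contra hne
    simp [assignOf, hne] at h
  · by_contra hne
    simp [assignOf, hne] at h

section Costs

open RestrictedEditPath

variable {n m : ℕ} {E1 : Finset (Fin n × Fin n)} {E2 : Finset (Fin m × Fin m)}
  (cvs : Fin n → Fin m → ℝ) (cvd : Fin n → ℝ) (cvi : Fin m → ℝ)
  (ces : Fin n × Fin n → Fin m × Fin m → ℝ) (ced : Fin n × Fin n → ℝ)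
  (cei : Fin m × Fin m → ℝ) (ω κ : ℝ)

theorem linForm_cvecQ_assignVec {σ : Fin n ⊕ Fin m ≃ Fin m ⊕ Fin n}
    (hσ : ∀ a, allowedMap a (σ a) = true) :
    linForm (cvecQ cvs cvd cvi ω) (assignVec σ) =
      (∑ p ∈ (ofEquiv E1 E2 σ).nsub, cvs p.1 p.2) + (∑ i ∈ (ofEquiv E1 E2 σ).nrem, cvd i)
        + ∑ k ∈ (ofEquiv E1 E2 σ).nins, cvi k := by
  have hV1 : ∀ i, cvecQ cvs cvd cvi ω (inl i, σ (inl i)) =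
      (∑ k, if σ (inl i) = inl k then cvs i k else 0) +
        if σ (inl i) = inr i then cvd i else 0 := fun i => by
    have := hσ (inl i)
    rcases h : σ (inl i) with k | i' <;> simp_all [cvecQ, allowedMap]
  have hV2 : ∀ k, cvecQ cvs cvd cvi ω (inr k, σ (inr k)) =
      if σ (inr k) = inl k then cvi k else 0 := fun k => by
    have := hσ (inr k)
    rcases h : σ (inr k) with k' | i <;> simp_all [cvecQ, allowedMap]
  have hrem : (ofEquiv E1 E2 σ).nrem = ({i | σ (inl i) = inr i} : Finset _) := by
    ext; simp [mem_ofEquiv_nrem hσ]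
  have hins : (ofEquiv E1 E2 σ).nins = ({k | σ (inr k) = inl k} : Finset _) := by
    ext; simp [mem_ofEquiv_nins hσ]
  rw [linForm_assignVec, Fintype.sum_sum_type, hrem, hins]
  simp only [hV1, hV2, sum_add_distrib, sum_filter, ofEquiv, Fintype.sum_prod_type]

theorem Dmat_eq_of_allowedMap {p q : AssignIdx n m} (hp : allowedMap p.1 p.2 = true)
    (hq : allowedMap q.1 q.2 = true) :
    Dmat E1 E2 ces ced cei ω p q =
      (edgeOf E1 p.1 q.1).elim 0 (fun e => (edgeOf E2 p.2 q.2).elim (ced e) (ces e)) +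
        if edgeOf E1 p.1 q.1 = none then (edgeOf E2 p.2 q.2).elim 0 cei else 0 := by
  simp only [Dmat, hp, hq, Bool.and_self, if_true]
  cases edgeOf E1 p.1 q.1 <;> cases edgeOf E2 p.2 q.2 <;> simp

theorem sum_esub_add_sum_erem_ofEquiv (σ : Fin n ⊕ Fin m ≃ Fin m ⊕ Fin n) :
    (∑ q ∈ (ofEquiv E1 E2 σ).esub, ces q.1 q.2) + ∑ e ∈ (ofEquiv E1 E2 σ).erem, ced e =
      ∑ e ∈ E1, (edgeOf E2 (σ (inl e.1)) (σ (inl e.2))).elim (ced e) (ces e) := by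
  have hrem : (ofEquiv E1 E2 σ).erem =
      {e ∈ E1 | edgeOf E2 (σ (inl e.1)) (σ (inl e.2)) = none} := by
    ext; simp [mem_ofEquiv_erem]
  rw [sum_eq_sum_elim_of_mem_iff (fun _ _ => mem_ofEquiv_esub) ces, hrem, sum_filter,
    ← sum_add_distrib]
  refine sum_congr rfl fun e _ => ?_
  cases edgeOf E2 (σ (inl e.1)) (σ (inl e.2)) <;> simp

theorem sum_eins_ofEquiv (σ : Fin n ⊕ Fin m ≃ Fin m ⊕ Fin n) :
    ∑ f ∈ (ofEquiv E1 E2 σ).eins, cei f =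
      ∑ f ∈ E2, if edgeOf E1 (σ.symm (inl f.1)) (σ.symm (inl f.2)) = none then cei f else 0 := by
  have hins : (ofEquiv E1 E2 σ).eins =
      {f ∈ E2 | edgeOf E1 (σ.symm (inl f.1)) (σ.symm (inl f.2)) = none} := by
    ext; simp [mem_ofEquiv_eins]
  rw [hins, sum_filter]

theorem quadForm_Dmat_assignVec {σ : Fin n ⊕ Fin m ≃ Fin m ⊕ Fin n}
    (hσ : ∀ a, allowedMap a (σ a) = true) :
    quadForm (Dmat E1 E2 ces ced cei ω) (assignVec σ) =
      (∑ q ∈ (ofEquiv E1 E2 σ).esub, ces q.1 q.2) + (∑ e ∈ (ofEquiv E1 E2 σ).erem, ced e)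
        + ∑ f ∈ (ofEquiv E1 E2 σ).eins, cei f := by
  have hD := fun a b => Dmat_eq_of_allowedMap ces ced cei ω (E1 := E1) (E2 := E2)
    (p := (a, σ a)) (q := (b, σ b)) (hσ a) (hσ b)
  rw [quadForm_assignVec]
  simp only [hD, sum_add_distrib]
  rw [sum_esub_add_sum_erem_ofEquiv, sum_eins_ofEquiv, sum_edgeOf]
  congr 1
  calc _ = ∑ a, ∑ b, if edgeOf E1 (σ.symm a) (σ.symm b) = none
          then (edgeOf E2 a b).elim 0 cei else 0 :=
        Fintype.sum_equiv σ _ _ fun a => Fintype.sum_equiv σ _ _ fun b => by simp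
    _ = ∑ a, ∑ b, (edgeOf E2 a b).elim 0
          (fun f => if edgeOf E1 (σ.symm a) (σ.symm b) = none then cei f else 0) := by
        refine sum_congr rfl fun a _ => sum_congr rfl fun b _ => ?_
        split_ifs <;> cases edgeOf E2 a b <;> simp
    _ = _ := sum_edgeOf _ _

theorem pathCostR_ofEquiv {σ : Fin n ⊕ Fin m ≃ Fin m ⊕ Fin n}
    (hσ : ∀ a, allowedMap a (σ a) = true) :
    pathCostR cvs cvd cvi ces ced cei κ (ofEquiv E1 E2 σ) =
      linForm (cvecQ cvs cvd cvi ω) (assignVec σ) +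
        κ * quadForm (Dmat E1 E2 ces ced cei ω) (assignVec σ) := by
  rw [linForm_cvecQ_assignVec cvs cvd cvi ω hσ, quadForm_Dmat_assignVec ces ced cei ω hσ]
  rfl

theorem pathCostR_eq_linForm_add_quadForm (P : RestrictedEditPath n m E1 E2) :
    pathCostR cvs cvd cvi ces ced cei κ P =
      linForm (cvecQ cvs cvd cvi ω) (assignOf P) +
        κ * quadForm (Dmat E1 E2 ces ced cei ω) (assignOf P) := by
  obtain ⟨σ, hσ, hx⟩ := (isEpsAssign_assignOf P).exists_equiv
  conv_lhs => rw [eq_ofEquiv_of_assignOf_eq hx]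
  rw [pathCostR_ofEquiv cvs cvd cvi ces ced cei ω κ hσ, hx]

theorem IsEpsAssign.exists_pathCostR_eq {x : AssignIdx n m → ℝ} (hx : IsEpsAssign x) :
    ∃ P : RestrictedEditPath n m E1 E2,
      linForm (cvecQ cvs cvd cvi ω) x + κ * quadForm (Dmat E1 E2 ces ced cei ω) x =
        pathCostR cvs cvd cvi ces ced cei κ P := by
  obtain ⟨σ, hσ, rfl⟩ := hx.exists_equiv
  exact ⟨ofEquiv E1 E2 σ, (pathCostR_ofEquiv cvs cvd cvi ces ced cei ω κ hσ).symm⟩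

theorem ged_eq_qap_of_quadForm_eq (Δ : AssignIdx n m → AssignIdx n m → ℝ)
    (hΔ : ∀ x, (1 / 2 : ℝ) * quadForm Δ x = κ * quadForm (Dmat E1 E2 ces ced cei ω) x) :
    (∀ P : RestrictedEditPath n m E1 E2, IsEpsAssign (assignOf P) ∧
        (1 / 2 : ℝ) * quadForm Δ (assignOf P) + linForm (cvecQ cvs cvd cvi ω) (assignOf P) =
          pathCostR cvs cvd cvi ces ced cei κ P) ∧
      (∀ x : AssignIdx n m → ℝ, IsEpsAssign x →
        ∃ P : RestrictedEditPath n m E1 E2,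
          (1 / 2 : ℝ) * quadForm Δ x + linForm (cvecQ cvs cvd cvi ω) x =
            pathCostR cvs cvd cvi ces ced cei κ P) ∧
      sInf {r : ℝ | ∃ P : RestrictedEditPath n m E1 E2,
          pathCostR cvs cvd cvi ces ced cei κ P = r} =
        sInf {r : ℝ | ∃ x : AssignIdx n m → ℝ, IsEpsAssign x ∧
          (1 / 2 : ℝ) * quadForm Δ x + linForm (cvecQ cvs cvd cvi ω) x = r} := by
  have hval : ∀ P : RestrictedEditPath n m E1 E2,
      (1 / 2 : ℝ) * quadForm Δ (assignOf P) + linForm (cvecQ cvs cvd cvi ω) (assignOf P) =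
        pathCostR cvs cvd cvi ces ced cei κ P := fun P => by
    rw [pathCostR_eq_linForm_add_quadForm cvs cvd cvi ces ced cei ω κ, hΔ, add_comm]
  have hex : ∀ x : AssignIdx n m → ℝ, IsEpsAssign x → ∃ P : RestrictedEditPath n m E1 E2,
      (1 / 2 : ℝ) * quadForm Δ x + linForm (cvecQ cvs cvd cvi ω) x =
        pathCostR cvs cvd cvi ces ced cei κ P := fun x hx => by
    rw [hΔ, add_comm]
    exact hx.exists_pathCostR_eq cvs cvd cvi ces ced cei ω κ
  refine ⟨fun P => ⟨isEpsAssign_assignOf P, hval P⟩, hex, congrArg sInf (Set.ext fun r => ?_)⟩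
  constructor
  · rintro ⟨P, rfl⟩
    exact ⟨assignOf P, isEpsAssign_assignOf P, hval P⟩
  · rintro ⟨x, hx, rfl⟩
    obtain ⟨P, hP⟩ := hex x hx
    exact ⟨P, hP.symm⟩

end Costs

theorem ged_eq_qap_general (n m : ℕ) (E1 : Finset (Fin n × Fin n))
    (E2 : Finset (Fin m × Fin m))
    (cvs : Fin n → Fin m → ℝ) (cvd : Fin n → ℝ) (cvi : Fin m → ℝ)
    (ces : Fin n × Fin n → Fin m × Fin m → ℝ)
    (ced : Fin n × Fin n → ℝ) (cei : Fin m × Fin m → ℝ) (ω : ℝ) :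
    letI D := Dmat E1 E2 ces ced cei ω
    letI c := cvecQ cvs cvd cvi ω
    -- directed case: Δ = D + Dᵀ, each edge operation counted once
    ((letI Δ := fun p q : AssignIdx n m => D p q + D q p
      (∀ P : RestrictedEditPath n m E1 E2, IsEpsAssign (assignOf P) ∧
        (1 / 2 : ℝ) * quadForm Δ (assignOf P) + linForm c (assignOf P) =
          pathCostR cvs cvd cvi ces ced cei 1 P) ∧
      (∀ x : AssignIdx n m → ℝ, IsEpsAssign x →
        ∃ P : RestrictedEditPath n m E1 E2,
          (1 / 2 : ℝ) * quadForm Δ x + linForm c x =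
            pathCostR cvs cvd cvi ces ced cei 1 P) ∧
      sInf {r : ℝ | ∃ P : RestrictedEditPath n m E1 E2,
          pathCostR cvs cvd cvi ces ced cei 1 P = r} =
        sInf {r : ℝ | ∃ x : AssignIdx n m → ℝ, IsEpsAssign x ∧
          (1 / 2 : ℝ) * quadForm Δ x + linForm c x = r}) ∧
    -- undirected case: Δ = D (which is then symmetric), edges stored in both
    -- orientations, hence the factor 1/2 on edge operation costs
    ((∀ i j : Fin n, (i, j) ∈ E1 ↔ (j, i) ∈ E1) →
     (∀ k l : Fin m, (k, l) ∈ E2 ↔ (l, k) ∈ E2) →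
     (∀ e f, ces (e.2, e.1) (f.2, f.1) = ces e f) →
     (∀ e, ced (e.2, e.1) = ced e) → (∀ f, cei (f.2, f.1) = cei f) →
      letI Δ := D
      (∀ P : RestrictedEditPath n m E1 E2, IsEpsAssign (assignOf P) ∧
        (1 / 2 : ℝ) * quadForm Δ (assignOf P) + linForm c (assignOf P) =
          pathCostR cvs cvd cvi ces ced cei (1 / 2) P) ∧
      (∀ x : AssignIdx n m → ℝ, IsEpsAssign x →
        ∃ P : RestrictedEditPath n m E1 E2,
          (1 / 2 : ℝ) * quadForm Δ x + linForm c x =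
            pathCostR cvs cvd cvi ces ced cei (1 / 2) P) ∧
      sInf {r : ℝ | ∃ P : RestrictedEditPath n m E1 E2,
          pathCostR cvs cvd cvi ces ced cei (1 / 2) P = r} =
        sInf {r : ℝ | ∃ x : AssignIdx n m → ℝ, IsEpsAssign x ∧
          (1 / 2 : ℝ) * quadForm Δ x + linForm c x = r})) :=
  ⟨ged_eq_qap_of_quadForm_eq cvs cvd cvi ces ced cei ω 1 _ fun x => by
      rw [quadForm_add_transpose]; ring,
    fun _ _ _ _ _ => ged_eq_qap_of_quadForm_eq cvs cvd cvi ces ced cei ω (1 / 2) _ fun _ => rfl⟩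

/-- let `Δ = D + Dᵀ` if the graphs are directed and `Δ = D` if
both are undirected.  The cost of the restricted edit path corresponding to an
ε-assignment vector `x` equals `(1/2)xᵀΔx + cᵀx`; conversely, every restricted
edit path's cost is of this form; consequently
`GED(G1,G2) = min { (1/2)xᵀΔx + cᵀx : x a vectorized ε-assignment matrix }`
(GED being the minimal cost of a restricted edit path). -/
theorem ged_eq_qap (n m : ℕ) (E1 : Finset (Fin n × Fin n))
    (E2 : Finset (Fin m × Fin m))
    (hs1 : ∀ i : Fin n, (i, i) ∉ E1) (hs2 : ∀ k : Fin m, (k, k) ∉ E2)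
    (cvs : Fin n → Fin m → ℝ) (cvd : Fin n → ℝ) (cvi : Fin m → ℝ)
    (ces : Fin n × Fin n → Fin m × Fin m → ℝ)
    (ced : Fin n × Fin n → ℝ) (cei : Fin m × Fin m → ℝ) (ω : ℝ) :
    letI D := Dmat E1 E2 ces ced cei ω
    letI c := cvecQ cvs cvd cvi ω
    -- directed case: Δ = D + Dᵀ, each edge operation counted once
    ((letI Δ := fun p q : AssignIdx n m => D p q + D q p
      (∀ P : RestrictedEditPath n m E1 E2, IsEpsAssign (assignOf P) ∧
        (1 / 2 : ℝ) * quadForm Δ (assignOf P) + linForm c (assignOf P) =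
          pathCostR cvs cvd cvi ces ced cei 1 P) ∧
      (∀ x : AssignIdx n m → ℝ, IsEpsAssign x →
        ∃ P : RestrictedEditPath n m E1 E2,
          (1 / 2 : ℝ) * quadForm Δ x + linForm c x =
            pathCostR cvs cvd cvi ces ced cei 1 P) ∧
      sInf {r : ℝ | ∃ P : RestrictedEditPath n m E1 E2,
          pathCostR cvs cvd cvi ces ced cei 1 P = r} =
        sInf {r : ℝ | ∃ x : AssignIdx n m → ℝ, IsEpsAssign x ∧
          (1 / 2 : ℝ) * quadForm Δ x + linForm c x = r}) ∧
    -- undirected case: Δ = D (which is then symmetric), edges stored in both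
    -- orientations, hence the factor 1/2 on edge operation costs
    ((∀ i j : Fin n, (i, j) ∈ E1 ↔ (j, i) ∈ E1) →
     (∀ k l : Fin m, (k, l) ∈ E2 ↔ (l, k) ∈ E2) →
     (∀ e f, ces (e.2, e.1) (f.2, f.1) = ces e f) →
     (∀ e, ced (e.2, e.1) = ced e) → (∀ f, cei (f.2, f.1) = cei f) →
      letI Δ := D
      (∀ P : RestrictedEditPath n m E1 E2, IsEpsAssign (assignOf P) ∧
        (1 / 2 : ℝ) * quadForm Δ (assignOf P) + linForm c (assignOf P) =
          pathCostR cvs cvd cvi ces ced cei (1 / 2) P) ∧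
      (∀ x : AssignIdx n m → ℝ, IsEpsAssign x →
        ∃ P : RestrictedEditPath n m E1 E2,
          (1 / 2 : ℝ) * quadForm Δ x + linForm c x =
            pathCostR cvs cvd cvi ces ced cei (1 / 2) P) ∧
      sInf {r : ℝ | ∃ P : RestrictedEditPath n m E1 E2,
          pathCostR cvs cvd cvi ces ced cei (1 / 2) P = r} =
        sInf {r : ℝ | ∃ x : AssignIdx n m → ℝ, IsEpsAssign x ∧
          (1 / 2 : ℝ) * quadForm Δ x + linForm c x = r})) :=
  ged_eq_qap_general n m E1 E2 cvs cvd cvi ces ced cei ω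
end
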